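/- arXiv:2006.00322 — 7 statements merged into one kernel-verified Lean document; each statement's English description precedes it below -/
import Mathlib

section
/- Consider a greedy assignment process where items of positive weight w_1, …, w_n are assigned one at a time, each to a knapsack currently having the minimum load-minus-capacity value among knapsacks i ∈ M with capacities c_i > 0. If the total weight satisfies ∑_{j=1}^n w_j ≤ ∑_{i∈M} c_i, then at every step the chosen knapsack has load strictly less than its capacity before the new item is added; consequently, after all assignments, no knapsack's load exceeds its capacity by more than max_j w_j. -/
/-!
Before item `t` is placed, the loads sum to the weight of the items `j < t`, which is strictly
less than the total weight and hence than the total capacity. So some knapsack has load below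
its capacity, and a fortiori so does the greedy choice, which minimises load minus capacity.
A knapsack's load therefore only grows while it is below capacity, and each step adds at most
the largest weight.
-/

open Finset

theorem lt_of_forall_sub_le_of_sum_lt {ι α : Type*} [Fintype ι] [AddCommGroup α]
    [LinearOrder α] [IsOrderedAddMonoid α] {x c : ι → α} {a : ι}
    (hmin : ∀ i, x a - c a ≤ x i - c i) (hsum : ∑ i, x i < ∑ i, c i) : x a < c a := by
  obtain ⟨i, -, hi⟩ := exists_lt_of_sum_lt hsum
  exact sub_neg.mp ((hmin i).trans_lt (sub_neg.mpr hi))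

section PrefixLoad

variable {M β : Type*} [DecidableEq M] [AddCommMonoid β] {n : ℕ} (A : Fin n → M) (w : Fin n → β)

def prefixLoad (t : ℕ) (i : M) : β :=
  ∑ j ∈ univ.filter (fun j : Fin n => (j : ℕ) < t ∧ A j = i), w j

@[simp]
theorem prefixLoad_zero (i : M) : prefixLoad A w 0 i = 0 := by
  simp [prefixLoad]

theorem prefixLoad_succ (t : Fin n) (i : M) :
    prefixLoad A w (t + 1) i = prefixLoad A w t i + if A t = i then w t else 0 := by
  have hsplit : univ.filter (fun j : Fin n => (j : ℕ) < t + 1 ∧ A j = i) =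
      univ.filter (fun j : Fin n => (j : ℕ) < t ∧ A j = i) ∪
        univ.filter (fun j : Fin n => j = t ∧ A j = i) := by
    ext j
    simp only [mem_union, mem_filter, mem_univ, true_and, Nat.lt_succ_iff_lt_or_eq, Fin.ext_iff]
    tauto
  rw [prefixLoad, prefixLoad, hsplit, sum_union]
  · congr 1
    simp_rw [← filter_filter, filter_eq', mem_univ, if_true, filter_singleton]
    split_ifs <;> simp
  · simp only [disjoint_filter]
    omega

theorem sum_prefixLoad [Fintype M] (t : ℕ) :
    ∑ i, prefixLoad A w t i = ∑ j ∈ univ.filter (fun j : Fin n => (j : ℕ) < t), w j := by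
  simp_rw [prefixLoad, ← filter_filter]
  exact sum_fiberwise _ A w

theorem sum_prefixLoad_lt [Fintype M] [PartialOrder β] [IsOrderedCancelAddMonoid β]
    (hw : ∀ j, 0 < w j) (t : Fin n) : ∑ i, prefixLoad A w t i < ∑ j, w j := by
  rw [sum_prefixLoad]
  exact sum_lt_sum_of_subset (filter_subset _ _) (mem_univ t) (by simp) (hw t)
    fun j _ _ ↦ (hw j).le

end PrefixLoad

section Greedy

variable {M α : Type*} [DecidableEq M] [AddCommGroup α] [LinearOrder α] [IsOrderedAddMonoid α]
  {n : ℕ} (A : Fin n → M) {w : Fin n → α} {c : M → α}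

theorem prefixLoad_lt_of_greedy [Fintype M] (hw : ∀ j, 0 < w j) (htot : ∑ j, w j ≤ ∑ i, c i)
    (hgreedy : ∀ t : Fin n, ∀ i, prefixLoad A w t (A t) - c (A t) ≤ prefixLoad A w t i - c i)
    (t : Fin n) : prefixLoad A w t (A t) < c (A t) :=
  lt_of_forall_sub_le_of_sum_lt (hgreedy t) ((sum_prefixLoad_lt A w hw t).trans_le htot)

theorem prefixLoad_le_add_of_forall_lt {wmax : α}
    (hfree : ∀ t : Fin n, prefixLoad A w t (A t) < c (A t)) (hwmax : ∀ j, w j ≤ wmax) {i : M} (hi : 0 ≤ c i + wmax) :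
    ∀ t ≤ n, prefixLoad A w t i ≤ c i + wmax
  | 0, _ => by simpa using hi
  | t + 1, ht => by
    let T : Fin n := ⟨t, ht⟩
    rw [show t + 1 = (T : ℕ) + 1 from rfl, prefixLoad_succ]
    split_ifs with hT
    · subst hT
      exact (add_lt_add_of_lt_of_le (hfree T) (hwmax T)).le
    · simpa using prefixLoad_le_add_of_forall_lt hfree hwmax hi t (Nat.le_of_succ_le ht)

end Greedy

theorem greedy_assignment_bound_general {M : Type*} [Fintype M] [DecidableEq M] (n : ℕ)
    (c : M → ℝ) (hc : ∀ i, 0 < c i)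
    (w : Fin n → ℝ) (hw : ∀ j, 0 < w j)
    (wmax : ℝ) (hwmax : IsGreatest (Set.range w) wmax)
    (htot : ∑ j, w j ≤ ∑ i, c i)
    (A : Fin n → M)
    (load : ℕ → M → ℝ)
    (hload : ∀ t i, load t i =
      ∑ j ∈ Finset.univ.filter (fun j : Fin n => (j : ℕ) < t ∧ A j = i), w j)
    (hgreedy : ∀ t : Fin n, ∀ i, load t (A t) - c (A t) ≤ load t i - c i) :
    (∀ t : Fin n, load t (A t) < c (A t)) ∧
    (∀ i, load n i ≤ c i + wmax) := by
  obtain rfl : load = prefixLoad A w := funext fun t ↦ funext (hload t)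
  have hfree := prefixLoad_lt_of_greedy A hw htot hgreedy
  obtain ⟨j, hj⟩ := hwmax.1
  have hwmax_pos : 0 < wmax := hj ▸ hw j
  exact ⟨hfree, fun i ↦ prefixLoad_le_add_of_forall_lt A hfree (fun j ↦ hwmax.2 ⟨j, rfl⟩)
    (add_pos (hc i) hwmax_pos).le n le_rfl⟩

/-- Greedy sequential assignment: items of positive weight are assigned one at a time,
each to a knapsack minimizing (current load − capacity). If the total weight is at most
the total capacity, then at every step the chosen knapsack's load is strictly below its
capacity before the item is added, and after all assignments no knapsack's load exceeds
its capacity by more than the maximum item weight. -/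
theorem greedy_assignment_bound {M : Type*} [Fintype M] [DecidableEq M] [Nonempty M] (n : ℕ)
    (c : M → ℝ) (hc : ∀ i, 0 < c i)
    (w : Fin n → ℝ) (hw : ∀ j, 0 < w j)
    (wmax : ℝ) (hwmax : IsGreatest (Set.range w) wmax)
    (htot : ∑ j, w j ≤ ∑ i, c i)
    (A : Fin n → M)
    (load : ℕ → M → ℝ)
    (hload : ∀ t i, load t i =
      ∑ j ∈ Finset.univ.filter (fun j : Fin n => (j : ℕ) < t ∧ A j = i), w j)
    (hgreedy : ∀ t : Fin n, ∀ i, load t (A t) - c (A t) ≤ load t i - c i) :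
    (∀ t : Fin n, load t (A t) < c (A t)) ∧
    (∀ i, load n i ≤ c i + wmax) :=
  greedy_assignment_bound_general n c hc w hw wmax hwmax htot A load hload hgreedy
end

section
/- For any d > 0 and any feasible GMKP assignment (x, z) — i.e., x : M × N → {0,1} with ∑_{j∈N} w_j x_{i,j} ≤ c_i for all i ∈ M and ∑_{i∈M} x_{i,j} = z_l for all l and j ∈ G_l — the inequality ∑_{l∈K} ∑_{j∈G_l} f_d(w_j)·z_l ≤ ∑_{i∈M} f_d(c_i) holds, where f_d(y) = max{q ∈ ℤ : q < y/d}. -/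
/-!
Since `z_l = ∑_i x_ij` for `j ∈ G_l`, the left-hand side is the sum over the knapsacks of the
`f_d`-weights of the items they hold. For a knapsack `i` holding a nonempty set `S`,
`∑_{j ∈ S} f_d(w_j) < ∑_{j ∈ S} w_j / d ≤ c_i / d`, and an integer strictly below `c_i / d` is at
most `f_d(c_i)`; an empty knapsack contributes `0 ≤ f_d(c_i)` since `c_i > 0`.
-/

/-- `fd d y` is the largest integer strictly less than `y / d`. -/
noncomputable def fd (d y : ℝ) : ℤ := ⌈y / d⌉ - 1

theorem le_fd_iff {d y : ℝ} {q : ℤ} : q ≤ fd d y ↔ (q : ℝ) < y / d := by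
  rw [fd, Int.le_sub_one_iff, Int.lt_ceil]

theorem fd_lt (d y : ℝ) : (fd d y : ℝ) < y / d :=
  le_fd_iff.1 le_rfl

theorem sum_fd_le_fd {ι : Type*} (S : Finset ι) {d c : ℝ} (hd : 0 < d) (hc : 0 < c)
    {w : ι → ℝ} (hcap : ∑ j ∈ S, w j ≤ c) : ∑ j ∈ S, fd d (w j) ≤ fd d c := by
  rw [le_fd_iff, Int.cast_sum]
  rcases S.eq_empty_or_nonempty with rfl | hS
  · simpa using div_pos hc hd
  calc ∑ j ∈ S, (fd d (w j) : ℝ) < ∑ j ∈ S, w j / d :=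
        Finset.sum_lt_sum_of_nonempty hS fun j _ => fd_lt d (w j)
    _ = (∑ j ∈ S, w j) / d := (Finset.sum_div _ _ _).symm
    _ ≤ c / d := div_le_div_of_nonneg_right hcap hd.le

theorem Finset.sum_mul_eq_sum_filter_of_zero_or_one {ι R : Type*} [Semiring R] [Nontrivial R]
    [DecidableEq R] (s : Finset ι) (g : ι → R) {x : ι → R} (hx : ∀ j, x j = 0 ∨ x j = 1) :
    ∑ j ∈ s, g j * x j = ∑ j ∈ s with x j = 1, g j := by
  rw [Finset.sum_filter]
  refine Finset.sum_congr rfl fun j _ => ?_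
  rcases hx j with h | h <;> simp [h]

theorem sum_fd_mul_le_fd {ι : Type*} (s : Finset ι) {d c : ℝ} (hd : 0 < d) (hc : 0 < c)
    {w x : ι → ℝ} (hx : ∀ j, x j = 0 ∨ x j = 1) (hcap : ∑ j ∈ s, w j * x j ≤ c) :
    ∑ j ∈ s, (fd d (w j) : ℝ) * x j ≤ fd d c := by
  rw [Finset.sum_mul_eq_sum_filter_of_zero_or_one _ _ hx] at hcap ⊢
  exact_mod_cast sum_fd_le_fd _ hd hc hcap

theorem Finset.sum_sum_eq_sum_of_existsUnique {ι κ M : Type*} [Fintype ι] [Fintype κ]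
    [AddCommMonoid M] (G : κ → Finset ι) (hG : ∀ j, ∃! l, j ∈ G l) (g : ι → M) :
    ∑ l, ∑ j ∈ G l, g j = ∑ j, g j := by
  classical
  choose ℓ hℓ huniq using hG
  have hfiber : ∀ l, G l = Finset.univ.filter (ℓ · = l) := fun l => by
    ext j
    simp only [Finset.mem_filter, Finset.mem_univ, true_and]
    exact ⟨fun hj => (huniq j l hj).symm, fun h => h ▸ hℓ j⟩
  simp_rw [hfiber]
  exact Finset.sum_fiberwise Finset.univ ℓ g

theorem fd_cut_valid_general {M N : Type*} [Fintype M] [Fintype N] (k : ℕ)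
    (c : M → ℝ) (w : N → ℝ) (hc : ∀ i, 0 < c i)
    (G : Fin k → Finset N) (hpart : ∀ j : N, ∃! l, j ∈ G l)
    (d : ℝ) (hd : 0 < d)
    (x : M → N → ℝ) (z : Fin k → ℝ)
    (hx01 : ∀ i j, x i j = 0 ∨ x i j = 1)
    (hcap : ∀ i, ∑ j, w j * x i j ≤ c i)
    (hgroup : ∀ l, ∀ j ∈ G l, ∑ i, x i j = z l) :
    ∑ l, ∑ j ∈ G l, (fd d (w j) : ℝ) * z l ≤ ∑ i, (fd d (c i) : ℝ) :=
  calc ∑ l, ∑ j ∈ G l, (fd d (w j) : ℝ) * z l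
      = ∑ l, ∑ j ∈ G l, ∑ i, (fd d (w j) : ℝ) * x i j := by
        refine Finset.sum_congr rfl fun l _ => Finset.sum_congr rfl fun j hj => ?_
        rw [← hgroup l j hj, Finset.mul_sum]
    _ = ∑ i, ∑ j, (fd d (w j) : ℝ) * x i j := by
        rw [Finset.sum_sum_eq_sum_of_existsUnique G hpart, Finset.sum_comm]
    _ ≤ ∑ i, (fd d (c i) : ℝ) :=
        Finset.sum_le_sum fun i _ => sum_fd_mul_le_fd _ hd (hc i) (hx01 i) (hcap i)

/-- The counting constraint obtained by applying `f_d` to weights and capacities is a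
valid inequality for every capacity-feasible GMKP assignment. -/
theorem fd_cut_valid {M N : Type*} [Fintype M] [Fintype N] (k : ℕ)
    (c : M → ℝ) (w : N → ℝ) (hc : ∀ i, 0 < c i) (hw : ∀ j, 0 < w j)
    (G : Fin k → Finset N) (hpart : ∀ j : N, ∃! l, j ∈ G l)
    (d : ℝ) (hd : 0 < d)
    (x : M → N → ℝ) (z : Fin k → ℝ)
    (hx01 : ∀ i j, x i j = 0 ∨ x i j = 1)
    (hz01 : ∀ l, z l = 0 ∨ z l = 1)
    (hcap : ∀ i, ∑ j, w j * x i j ≤ c i)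
    (hgroup : ∀ l, ∀ j ∈ G l, ∑ i, x i j = z l) :
    ∑ l, ∑ j ∈ G l, (fd d (w j) : ℝ) * z l ≤ ∑ i, (fd d (c i) : ℝ) :=
  fd_cut_valid_general k c w hc G hpart d hd x z hx01 hcap hgroup
end

section
/- Let a ≥ 2 be an integer and suppose a knapsack of capacity c = a^r (r ∈ ℕ) is loaded greedily with items whose weights are powers of a, in non-increasing order of weight, where each item is added only if it fits in the remaining capacity exactly according to the greedy rule. Then at every step, the remaining free capacity is a nonnegative integer multiple of the weight of the next item to be considered whenever that weight is at most the capacity; consequently, an item of weight a^q ≤ a^r whose assignment would exceed the capacity cannot exist—either it fits exactly within the free capacity or the knapsack is already full. -/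
theorem pow_dvd_pow_sub_sum_pow {R ι : Type*} [CommRing R] (a : R) {n r : ℕ} (s : Finset ι)
    (e : ι → ℕ) (hr : n ≤ r) (he : ∀ i ∈ s, n ≤ e i) :
    a ^ n ∣ a ^ r - ∑ i ∈ s, a ^ e i :=
  dvd_sub (pow_dvd_pow a hr) (Finset.dvd_sum fun i hi => pow_dvd_pow a (he i hi))

theorem powers_residual_multiple_general (a : ℤ) (r s : ℕ) (q : Fin s → ℕ)
    (hmono : ∀ t u : Fin s, t ≤ u → q u ≤ q t) (hle : ∀ t, q t ≤ r) :
    ∀ t : Fin s,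
      (a ^ (q t) ∣ (a ^ r - ∑ u ∈ Finset.univ.filter (· < t), a ^ (q u))) ∧
      (0 < a ^ r - ∑ u ∈ Finset.univ.filter (· < t), a ^ (q u) →
        a ^ (q t) ≤ a ^ r - ∑ u ∈ Finset.univ.filter (· < t), a ^ (q u)) := by
  intro t
  have hdvd := pow_dvd_pow_sub_sum_pow a (Finset.univ.filter (· < t)) q (hle t)
    fun u hu => hmono u t (Finset.mem_filter.mp hu).2.le
  exact ⟨hdvd, fun hpos => Int.le_of_dvd hpos hdvd⟩

/-- Greedy loading of a knapsack of capacity `a^r` with powers-of-`a` weights in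
non-increasing order: at every step the remaining free capacity is divisible by the
weight `a^(q t)` of the next item, hence if positive it is at least `a^(q t)`; an item
whose assignment would exceed capacity cannot exist. -/
theorem powers_residual_multiple (a : ℤ) (ha : 2 ≤ a) (r s : ℕ) (q : Fin s → ℕ)
    (hmono : ∀ t u : Fin s, t ≤ u → q u ≤ q t) (hle : ∀ t, q t ≤ r) :
    ∀ t : Fin s,
      (a ^ (q t) ∣ (a ^ r - ∑ u ∈ Finset.univ.filter (· < t), a ^ (q u))) ∧
      (0 < a ^ r - ∑ u ∈ Finset.univ.filter (· < t), a ^ (q u) →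
        a ^ (q t) ≤ a ^ r - ∑ u ∈ Finset.univ.filter (· < t), a ^ (q u)) :=
  powers_residual_multiple_general a r s q hmono hle
end

section
/- Let c > 0 and let an assignment place items into knapsacks of equal capacity c such that (a) the total weight of all assigned items is at most m·c (m the number of knapsacks), (b) the number of items with weight > c/2 is at most m, and (c) each item of weight > c/2 is alone in its knapsack or is the first (heaviest) item in its knapsack. If items are assigned greedily in non-increasing weight order to the knapsack with maximum free capacity, then every item of weight > c/2 is placed in an empty knapsack. -/
/-!
Weights are sorted, so a heavy item `t` is preceded only by heavy items; as there are at most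
`m` heavy items, fewer than `m` items come before `t`. Hence some knapsack is still empty when
`t` is assigned, and the greedy rule puts `t` into a knapsack of load at most that, i.e. zero.
-/

open Finset

theorem Fin.val_add_one_le_card_filter_lt_of_antitone {α : Type*} [Preorder α] [DecidableLT α]
    {n : ℕ} {w : Fin n → α} (hw : Antitone w) {c : α} {t : Fin n} (ht : c < w t) :
    (t : ℕ) + 1 ≤ #(univ.filter fun j => c < w j) := by
  rw [← Fin.card_Iic t]
  refine card_le_card fun u hu => ?_
  simpa using ht.trans_le (hw (mem_Iic.mp hu))

theorem Fin.card_image_filter_val_lt_le {M : Type*} [DecidableEq M] {n : ℕ} (A : Fin n → M)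
    (t : ℕ) : #((univ.filter fun j : Fin n => (j : ℕ) < t).image A) ≤ t :=
  calc #((univ.filter fun j : Fin n => (j : ℕ) < t).image A)
      ≤ #(univ.filter fun j : Fin n => (j : ℕ) < t) := card_image_le
    _ ≤ #(range t) := card_le_card_of_injOn Fin.val (fun j hj => by simpa using hj)
        Fin.val_injective.injOn
    _ = t := card_range t

theorem Fin.exists_forall_val_lt_ne_of_lt_card {M : Type*} [Fintype M] {n : ℕ}
    (A : Fin n → M) {t : ℕ} (ht : t < Fintype.card M) :
    ∃ i, ∀ j : Fin n, (j : ℕ) < t → A j ≠ i := by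
  classical
  obtain ⟨i, -, hi⟩ := exists_mem_notMem_of_card_lt_card (s := (univ.filter fun j : Fin n =>
    (j : ℕ) < t).image A) (t := univ) ((Fin.card_image_filter_val_lt_le A t).trans_lt ht)
  exact ⟨i, fun j hj hji => hi (mem_image.mpr ⟨j, by simpa using hj, hji⟩)⟩

theorem heavy_items_to_empty_knapsacks_general {M : Type*} [Fintype M] [DecidableEq M] (n : ℕ)
    (c : ℝ)
    (w : Fin n → ℝ) (hw : ∀ j, 0 < w j)
    (hsorted : ∀ t u : Fin n, t ≤ u → w u ≤ w t)
    (A : Fin n → M)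
    (load : ℕ → M → ℝ)
    (hload : ∀ t i, load t i =
      ∑ j ∈ Finset.univ.filter (fun j : Fin n => (j : ℕ) < t ∧ A j = i), w j)
    (hheavycount : (Finset.univ.filter (fun j : Fin n => c / 2 < w j)).card ≤ Fintype.card M)
    (hgreedy : ∀ t : Fin n, ∀ i, load t (A t) ≤ load t i) :
    ∀ t : Fin n, c / 2 < w t → load t (A t) = 0 := by
  intro t ht
  have hbefore : (t : ℕ) < Fintype.card M :=
    (Fin.val_add_one_le_card_filter_lt_of_antitone (fun _ _ h => hsorted _ _ h) ht).trans
      hheavycount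
  obtain ⟨i, hi⟩ := Fin.exists_forall_val_lt_ne_of_lt_card A hbefore
  have hempty : load t i = 0 := by
    rw [hload]
    exact sum_eq_zero fun j hj => absurd (mem_filter.mp hj).2.2 (hi j (mem_filter.mp hj).2.1)
  have hnonneg : 0 ≤ load t (A t) := by
    rw [hload]
    exact sum_nonneg fun j _ => (hw j).le
  linarith [hgreedy t i]

/-- Equal-capacity greedy packing: with items in non-increasing weight order, total weight
at most `m·c`, at most `m` items heavier than `c/2`, each heavy item alone or first in its
knapsack, and the greedy rule assigning each item to a currently least-loaded knapsack,
every item of weight `> c/2` is placed in an empty knapsack. -/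
theorem heavy_items_to_empty_knapsacks {M : Type*} [Fintype M] [DecidableEq M] (n : ℕ)
    (c : ℝ) (hc : 0 < c)
    (w : Fin n → ℝ) (hw : ∀ j, 0 < w j)
    (hsorted : ∀ t u : Fin n, t ≤ u → w u ≤ w t)
    (A : Fin n → M)
    (load : ℕ → M → ℝ)
    (hload : ∀ t i, load t i =
      ∑ j ∈ Finset.univ.filter (fun j : Fin n => (j : ℕ) < t ∧ A j = i), w j)
    (htot : ∑ j, w j ≤ (Fintype.card M : ℝ) * c)
    (hheavycount : (Finset.univ.filter (fun j : Fin n => c / 2 < w j)).card ≤ Fintype.card M)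
    (hheavy : ∀ t : Fin n, c / 2 < w t →
      ((∀ u : Fin n, u ≠ t → A u ≠ A t) ∨ (∀ u : Fin n, (u : ℕ) < (t : ℕ) → A u ≠ A t)))
    (hgreedy : ∀ t : Fin n, ∀ i, load t (A t) ≤ load t i) :
    ∀ t : Fin n, c / 2 < w t → load t (A t) = 0 :=
  heavy_items_to_empty_knapsacks_general n c w hw hsorted A load hload hheavycount hgreedy
end

section
/- Let d > 0 and let c_1, …, c_m > 0 be capacities. If d' > 0 satisfies d_h < d' < d_{h+1} for consecutive elements d_h < d_{h+1} of the set D' = (0, w_max) ∩ {c_i/q : i ∈ M, q ∈ ℤ_{>0}}, then ∑_{i∈M} f_{d_h}(c_i) = ∑_{i∈M} f_{d'}(c_i), and for every weight w > 0, f_{d'}(w) ≤ f_{d_h}(w); consequently the counting constraint for d' is implied by the counting constraint for d_h. -/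
theorem fd_le_fd_of_le {a b y : ℝ} (hy : 0 ≤ y) (ha : 0 < a) (hab : a ≤ b) : fd b y ≤ fd a y := by
  unfold fd
  have := Int.ceil_mono (div_le_div_of_nonneg_left hy ha hab)
  omega

theorem exists_div_mem_Ioc_of_fd_lt {a b y : ℝ} (ha : 0 < a) (hb : 0 < b) (hy : 0 < y)
    (h : fd b y < fd a y) : ∃ q : ℕ, 0 < q ∧ y / q ∈ Set.Ioc a b := by
  have hyb : 0 < y / b := div_pos hy hb
  have hq_int : (⌈y / b⌉₊ : ℤ) = ⌈y / b⌉ := Int.natCast_ceil_eq_ceil hyb.le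
  have hq : (0 : ℝ) < ⌈y / b⌉₊ := by exact_mod_cast Nat.ceil_pos.mpr hyb
  refine ⟨⌈y / b⌉₊, Nat.ceil_pos.mpr hyb, ?_, ?_⟩
  · have : (⌈y / b⌉₊ : ℤ) < ⌈y / a⌉ := by unfold fd at h; omega
    rw [lt_div_iff₀ hq, mul_comm, ← lt_div_iff₀ ha]
    exact_mod_cast Int.lt_ceil.mp this
  · rw [div_le_iff₀ hq, mul_comm, ← div_le_iff₀ hb]
    exact Nat.le_ceil _

theorem fd_eq_of_forall_div_notMem_Ioc {a b y : ℝ} (ha : 0 < a) (hab : a ≤ b) (hy : 0 < y)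
    (h : ∀ q : ℕ, 0 < q → y / q ∉ Set.Ioc a b) : fd a y = fd b y := by
  refine le_antisymm ?_ (fd_le_fd_of_le hy.le ha hab)
  by_contra! hlt
  obtain ⟨q, hq, hmem⟩ := exists_div_mem_Ioc_of_fd_lt ha (ha.trans_le hab) hy hlt
  exact h q hq hmem

theorem breakpoint_constraints_suffice_general {M : Type*} [Fintype M] {ι : Type*}
    (c : M → ℝ) (hc : ∀ i, 0 < c i) (wmax : ℝ)
    (D' : Set ℝ)
    (hD' : D' = {x : ℝ | 0 < x ∧ x < wmax ∧ ∃ (i : M) (q : ℕ), 0 < q ∧ x = c i / q})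
    (dh d' dh1 : ℝ)
    (hdh : dh ∈ D') (hdh1 : dh1 ∈ D')
    (hconsec : ∀ x ∈ D', ¬(dh < x ∧ x < dh1))
    (hbetween : dh < d' ∧ d' < dh1) :
    (∑ i, fd dh (c i) = ∑ i, fd d' (c i)) ∧
    (∀ w : ℝ, 0 < w → fd d' w ≤ fd dh w) ∧
    (∀ (S : Finset ι) (w : ι → ℝ), (∀ j ∈ S, 0 < w j) →
      ∑ j ∈ S, fd dh (w j) ≤ ∑ i, fd dh (c i) →
      ∑ j ∈ S, fd d' (w j) ≤ ∑ i, fd d' (c i)) := by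
  subst hD'
  obtain ⟨hdh_pos, -⟩ := hdh
  obtain ⟨-, hdh1_lt, -⟩ := hdh1
  obtain ⟨hdh_lt, hd'_lt⟩ := hbetween
  have hmono (w : ℝ) (hw : 0 < w) : fd d' w ≤ fd dh w := fd_le_fd_of_le hw.le hdh_pos hdh_lt.le
  have hsum : ∑ i, fd dh (c i) = ∑ i, fd d' (c i) := by
    refine Finset.sum_congr rfl fun i _ ↦
      fd_eq_of_forall_div_notMem_Ioc hdh_pos hdh_lt.le (hc i) fun q hq ⟨hlow, hup⟩ ↦ ?_
    exact hconsec _ ⟨hdh_pos.trans hlow, by linarith, i, q, hq, rfl⟩ ⟨hlow, by linarith⟩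
  refine ⟨hsum, hmono, fun S w hw hle ↦ ?_⟩
  calc ∑ j ∈ S, fd d' (w j) ≤ ∑ j ∈ S, fd dh (w j) :=
        Finset.sum_le_sum fun j hj ↦ hmono (w j) (hw j hj)
    _ ≤ ∑ i, fd dh (c i) := hle
    _ = ∑ i, fd d' (c i) := hsum

/-- Between consecutive breakpoints of `D' = (0, w_max) ∩ {c_i/q}`, the right-hand side
`∑_i f_d(c_i)` is unchanged while `f_d(w)` is non-increasing in `d`; consequently the
counting constraint at `d'` is implied by the one at the breakpoint `d_h` below it. -/
theorem breakpoint_constraints_suffice {M : Type*} [Fintype M] {ι : Type*}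
    (c : M → ℝ) (hc : ∀ i, 0 < c i) (wmax : ℝ) (hwmax : 0 < wmax)
    (D' : Set ℝ)
    (hD' : D' = {x : ℝ | 0 < x ∧ x < wmax ∧ ∃ (i : M) (q : ℕ), 0 < q ∧ x = c i / q})
    (dh d' dh1 : ℝ)
    (hdh : dh ∈ D') (hdh1 : dh1 ∈ D')
    (hconsec : ∀ x ∈ D', ¬(dh < x ∧ x < dh1))
    (hbetween : dh < d' ∧ d' < dh1) :
    (∑ i, fd dh (c i) = ∑ i, fd d' (c i)) ∧
    (∀ w : ℝ, 0 < w → fd d' w ≤ fd dh w) ∧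
    (∀ (S : Finset ι) (w : ι → ℝ), (∀ j ∈ S, 0 < w j) →
      ∑ j ∈ S, fd dh (w j) ≤ ∑ i, fd dh (c i) →
      ∑ j ∈ S, fd d' (w j) ≤ ∑ i, fd d' (c i)) :=
  breakpoint_constraints_suffice_general c hc wmax D' hD' dh d' dh1 hdh hdh1 hconsec hbetween
end

section
/- Let m ≥ 3 knapsacks each have capacity 1, and consider 2m+1 items each of weight m/(2m+1). Then (a) the total item weight (2m+1)·m/(2m+1) = m equals the total capacity, (b) each item weight satisfies m/(2m+1) < 1/2, so ∑_j f_{1/2}(w_j) = 0 ≤ ∑_i f_{1/2}(1) = m, yet (c) any assignment of all 2m+1 items to the m knapsacks places at least three items in some knapsack, exceeding its capacity by at least 3m/(2m+1) − 1 = 1/2 − 3/(4m+2). -/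
lemma fd_eq_zero {d y : ℝ} (hd : 0 < d) (hy : 0 < y) (hyd : y ≤ d) : fd d y = 0 := by
  have hceil : ⌈y / d⌉ = 1 := by
    rw [Int.ceil_eq_iff]
    constructor
    · norm_num; positivity
    · norm_num; exact (div_le_one hd).2 hyd
  rw [fd, hceil, sub_self]

lemma div_two_mul_add_one_lt_half (m : ℕ) : (m : ℝ) / (2 * m + 1) < 1 / 2 := by
  rw [div_lt_div_iff₀ (by positivity) two_pos]
  linarith

lemma three_mul_le_sum_const {ι : Type*} (s : Finset ι) (hs : 3 ≤ s.card) {w : ℝ}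
    (hw : 0 ≤ w) : 3 * w ≤ ∑ _i ∈ s, w := by
  rw [Finset.sum_const, nsmul_eq_mul]
  gcongr
  exact_mod_cast hs

/-- Tight `β ≤ 1/2` example: `m ≥ 3` unit-capacity knapsacks and `2m+1` items of weight
`m/(2m+1)`. The total weight equals total capacity and the `d = 1/2` counting constraint
is satisfied, yet any assignment of all items puts at least three items in some knapsack,
exceeding its capacity by `3m/(2m+1) − 1 = 1/2 − 3/(4m+2)`. -/
theorem tight_half_example (m : ℕ) (hm : 3 ≤ m) :
    ((2 * m + 1 : ℝ)) * ((m : ℝ) / (2 * m + 1)) = (m : ℝ) ∧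
    (m : ℝ) / (2 * m + 1) < 1 / 2 ∧
    fd (1 / 2) ((m : ℝ) / (2 * m + 1)) = 0 ∧
    fd (1 / 2) 1 = 1 ∧
    ∀ A : Fin (2 * m + 1) → Fin m, ∃ i : Fin m,
      3 ≤ (Finset.univ.filter (fun j => A j = i)).card ∧
      3 * (m : ℝ) / (2 * m + 1) - 1 ≤
        (∑ _j ∈ Finset.univ.filter (fun j => A j = i), (m : ℝ) / (2 * m + 1)) - 1 ∧
      3 * (m : ℝ) / (2 * m + 1) - 1 = 1 / 2 - 3 / (4 * (m : ℝ) + 2) := by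
  have hweight_lt := div_two_mul_add_one_lt_half m
  have hweight_pos : (0 : ℝ) < m / (2 * m + 1) := by
    have : (0 : ℝ) < m := by exact_mod_cast (by omega : 0 < m)
    positivity
  refine ⟨by field_simp, hweight_lt, fd_eq_zero one_half_pos hweight_pos hweight_lt.le,
    by norm_num [fd], fun A => ?_⟩
  obtain ⟨i, hi⟩ := Fintype.exists_lt_card_fiber_of_mul_lt_card (n := 2) A (by simp; omega)
  refine ⟨i, hi, ?_, by field_simp; ring⟩
  rw [mul_div_assoc]
  linarith [three_mul_le_sum_const _ hi hweight_pos.le]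
end

section
/- Let m ≥ 3 and consider m knapsacks of capacity 1 and a single group with m+1 items of weight m/(m+1) each. Then the total group weight is m = total capacity, so the aggregated knapsack constraint is satisfied with equality, but any assignment of all m+1 items to the m knapsacks places two items in some knapsack, exceeding its capacity by 2m/(m+1) − 1 = 1 − 2/(m+1). -/
/-! By pigeonhole some knapsack receives two of the `m + 1` items, so its load is at least
`2m / (m + 1)`. -/

lemma Fintype.exists_two_le_card_fiber_of_card_lt {α β : Type*} [Fintype α] [Fintype β]
    [DecidableEq β] (f : α → β) (h : Fintype.card β < Fintype.card α) :
    ∃ b, 2 ≤ (Finset.univ.filter fun a => f a = b).card :=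
  Fintype.exists_lt_card_fiber_of_mul_lt_card f (n := 1) (by simpa using h)

lemma Finset.two_mul_le_sum_const {ι R : Type*} [Semiring R] [PartialOrder R]
    [IsOrderedRing R] {s : Finset ι} (hs : 2 ≤ s.card) {w : R} (hw : 0 ≤ w) :
    2 * w ≤ ∑ _i ∈ s, w := by
  rw [Finset.sum_const, nsmul_eq_mul]
  exact mul_le_mul_of_nonneg_right (by simpa using Nat.mono_cast (α := R) hs) hw

lemma Nat.cast_succ_mul_div_cast_succ (m : ℕ) : ((m + 1 : ℝ)) * ((m : ℝ) / (m + 1)) = m :=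
  mul_div_cancel₀ _ m.cast_add_one_ne_zero

lemma Nat.two_mul_div_cast_succ_sub_one (m : ℕ) :
    2 * (m : ℝ) / (m + 1) - 1 = 1 - 2 / ((m : ℝ) + 1) := by
  field_simp
  ring

theorem tight_one_example_general (m : ℕ) :
    ((m + 1 : ℝ)) * ((m : ℝ) / (m + 1)) = (m : ℝ) ∧
    ∀ A : Fin (m + 1) → Fin m, ∃ i : Fin m,
      2 ≤ (Finset.univ.filter (fun j => A j = i)).card ∧
      2 * (m : ℝ) / (m + 1) - 1 ≤
        (∑ _j ∈ Finset.univ.filter (fun j => A j = i), (m : ℝ) / (m + 1)) - 1 ∧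
      2 * (m : ℝ) / (m + 1) - 1 = 1 - 2 / ((m : ℝ) + 1) := by
  refine ⟨m.cast_succ_mul_div_cast_succ, fun A => ?_⟩
  obtain ⟨i, hi⟩ := Fintype.exists_two_le_card_fiber_of_card_lt A (by simp)
  refine ⟨i, hi, ?_, m.two_mul_div_cast_succ_sub_one⟩
  have hpair := Finset.two_mul_le_sum_const hi (w := (m : ℝ) / (m + 1)) (by positivity)
  rw [mul_div_assoc]
  linarith

/-- Tight `β ≤ 1` example: `m ≥ 3` unit-capacity knapsacks and one group of `m+1` items
of weight `m/(m+1)`. The total group weight equals total capacity, but any assignment of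
all items places two items in some knapsack, exceeding its capacity by
`2m/(m+1) − 1 = 1 − 2/(m+1)`. -/
theorem tight_one_example (m : ℕ) (hm : 3 ≤ m) :
    ((m + 1 : ℝ)) * ((m : ℝ) / (m + 1)) = (m : ℝ) ∧
    ∀ A : Fin (m + 1) → Fin m, ∃ i : Fin m,
      2 ≤ (Finset.univ.filter (fun j => A j = i)).card ∧
      2 * (m : ℝ) / (m + 1) - 1 ≤
        (∑ _j ∈ Finset.univ.filter (fun j => A j = i), (m : ℝ) / (m + 1)) - 1 ∧
      2 * (m : ℝ) / (m + 1) - 1 = 1 - 2 / ((m : ℝ) + 1) :=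
  tight_one_example_general m
end
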